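/- arXiv:1304.6659 — 2 statements merged into one kernel-verified Lean document; each statement's English description precedes it below -/
import Mathlib

section
/- Let A be the 3×5 integer matrix with rows (1,0,0,0,1), (2,1,1,0,−3), (−3,0,−1,−1,0) (the windmill example with variables a = shaft power P, b = diameter D, c = wind speed V, d = rotational speed n, e = air density ρ). Then the toric ideal I_A ⊆ ℚ[a,b,c,d,e] equals the ideal generated by the four binomials b d − c, b² c³ e − a, c⁵ e − a d², and b c⁴ e − a d. -/
open MvPolynomial

/-- The monomial `x^u = ∏ i, x i ^ u i` in `ℚ[x_1,…,x_n]`. -/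
noncomputable def monoP {n : ℕ} (u : Fin n → ℕ) : MvPolynomial (Fin n) ℚ :=
  ∏ i, X i ^ u i

/-- The ℚ-algebra homomorphism `φ_A : ℚ[x_1,…,x_n] → ℚ[t_1^{±1},…,t_d^{±1}]`
(the group algebra of `ℤ^d` over `ℚ`) sending `x_i` to `t^{a_i}`, where
`a_i` is the `i`-th column of the integer matrix `A`. -/
noncomputable def phi {d n : ℕ} (A : Matrix (Fin d) (Fin n) ℤ) :
    MvPolynomial (Fin n) ℚ →ₐ[ℚ] AddMonoidAlgebra ℚ (Fin d → ℤ) :=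
  MvPolynomial.aeval fun i => AddMonoidAlgebra.single (fun j => A j i) (1 : ℚ)

/-- The toric ideal `I_A ⊆ ℚ[x_1,…,x_n]`: the kernel of `φ_A`. -/
noncomputable def toricIdeal {d n : ℕ} (A : Matrix (Fin d) (Fin n) ℤ) :
    Ideal (MvPolynomial (Fin n) ℚ) :=
  RingHom.ker (phi A)

/-- The windmill matrix: rows `(1,0,0,0,1)`, `(2,1,1,0,-3)`, `(-3,0,-1,-1,0)`;
variables `a` = shaft power `P`, `b` = diameter `D`, `c` = wind speed `V`,
`d` = rotational speed `n`, `e` = air density `ρ`. -/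
noncomputable def Awind : Matrix (Fin 3) (Fin 5) ℤ :=
  !![1, 0, 0, 0, 1; 2, 1, 1, 0, -3; -3, 0, -1, -1, 0]

/-!
Modulo `bd - c` and `b²c³e - a`, every polynomial is congruent to a polynomial in `b, d, e`
alone (substitute `c = bd`, `a = b⁵d³e`). The columns of `Awind` belonging to `b, d, e` form a
unimodular matrix, so distinct monomials in `b, d, e` have distinct images under `φ_A`, which is
therefore injective on `ℚ[b, d, e]`. A polynomial in the kernel is thus congruent to an element
of `ℚ[b, d, e]` killed by `φ_A`, that is, to `0`. Conversely, each of the four binomials has both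
monomials of the same `A`-degree.
-/

open Matrix

theorem RingHom.ker_eq_of_sub_mem_of_injective {R S T F G : Type*} [Ring R] [Ring S] [Ring T]
    [FunLike F R S] [RingHomClass F R S] [FunLike G T R] [RingHomClass G T R]
    (φ : F) {J : Ideal R} (hJ : J ≤ RingHom.ker φ) (ψ : G) (ρ : R → T)
    (hρ : ∀ p, p - ψ (ρ p) ∈ J) (hinj : Function.Injective (φ ∘ ψ)) :
    RingHom.ker φ = J := by
  refine le_antisymm (fun p hp => ?_) hJ
  have hψρ : φ (ψ (ρ p)) = φ (ψ 0) := by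
    have := hJ (hρ p)
    rw [RingHom.mem_ker, map_sub, RingHom.mem_ker.mp hp, zero_sub, neg_eq_zero] at this
    rwa [map_zero, map_zero]
  simpa [hinj hψρ] using hρ p

theorem MvPolynomial.sub_aeval_mem {R σ : Type*} [CommRing R] {J : Ideal (MvPolynomial σ R)}
    (f : σ → MvPolynomial σ R) (hf : ∀ i, X i - f i ∈ J) (p : MvPolynomial σ R) :
    p - aeval f p ∈ J := by
  rw [← Ideal.Quotient.mk_eq_mk_iff_sub_mem]
  have : (Ideal.Quotient.mkₐ R J).comp (aeval f) = Ideal.Quotient.mkₐ R J :=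
    MvPolynomial.algHom_ext fun i => by
      simpa [eq_comm] using (Ideal.Quotient.mk_eq_mk_iff_sub_mem _ _).mpr (hf i)
  exact (congrArg (· p) this).symm

def exponentHom {d n : ℕ} (A : Matrix (Fin d) (Fin n) ℤ) : (Fin n →₀ ℕ) →+ (Fin d → ℤ) where
  toFun u := A *ᵥ fun i => (u i : ℤ)
  map_zero' := A.mulVec_zero
  map_add' u v := by
    simp only [Finsupp.coe_add, Pi.add_apply, Nat.cast_add]
    exact A.mulVec_add _ _

theorem phi_eq_mapDomainAlgHom {d n : ℕ} (A : Matrix (Fin d) (Fin n) ℤ) :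
    phi A = AddMonoidAlgebra.mapDomainAlgHom ℚ ℚ (exponentHom A) := by
  refine MvPolynomial.algHom_ext fun i => ?_
  rw [phi, aeval_X, AddMonoidAlgebra.mapDomainAlgHom_apply, X, ← single_eq_monomial,
    AddMonoidAlgebra.mapDomain_single]
  congr 1
  ext j
  simp [exponentHom, mulVec, dotProduct, Finsupp.single_apply]

theorem phi_injective {d n : ℕ} {A : Matrix (Fin d) (Fin n) ℤ}
    (hA : Function.Injective (exponentHom A)) : Function.Injective (phi A) := by
  rw [phi_eq_mapDomainAlgHom]
  exact AddMonoidAlgebra.mapDomain_injective hA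

theorem phi_comp_rename {d m n : ℕ} (A : Matrix (Fin d) (Fin n) ℤ) (e : Fin m → Fin n) :
    (phi A).comp (rename e) = phi (A.submatrix id e) :=
  MvPolynomial.algHom_ext fun i => by simp [phi]

noncomputable def windmillIdeal : Ideal (MvPolynomial (Fin 5) ℚ) :=
  Ideal.span {X 1 * X 3 - X 2, X 1 ^ 2 * X 2 ^ 3 * X 4 - X 0, X 2 ^ 5 * X 4 - X 0 * X 3 ^ 2,
    X 1 * X 2 ^ 4 * X 4 - X 0 * X 3}

theorem windmillIdeal_le_toricIdeal : windmillIdeal ≤ toricIdeal Awind := by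
  simp only [windmillIdeal, Ideal.span_le, Set.insert_subset_iff, Set.singleton_subset_iff,
    SetLike.mem_coe, toricIdeal, RingHom.mem_ker, map_sub, map_mul, map_pow, phi, aeval_X,
    AddMonoidAlgebra.single_pow, AddMonoidAlgebra.single_mul_single, one_pow, mul_one,
    sub_eq_zero]
  refine ⟨?_, ?_, ?_, ?_⟩ <;> congr 1 <;> funext j <;> fin_cases j <;> simp [Awind]

def windmillBasis : Fin 3 → Fin 5 := ![1, 3, 4]

/-- The variables `a, b, c, d, e` written, modulo `bd - c` and `b²c³e - a`, as polynomials in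
`b, d, e`, which are the variables `X 0, X 1, X 2` here. -/
noncomputable def windmillSubst : Fin 5 → MvPolynomial (Fin 3) ℚ :=
  ![X 0 ^ 5 * X 1 ^ 3 * X 2, X 0, X 0 * X 1, X 1, X 2]

theorem X_sub_rename_windmillSubst_mem (i : Fin 5) :
    X i - rename windmillBasis (windmillSubst i) ∈ windmillIdeal := by
  have hc : X 2 - X 1 * X 3 ∈ windmillIdeal := by
    rw [← neg_sub]
    exact neg_mem (Ideal.subset_span (by simp))
  have ha : X 0 - X 1 ^ 5 * X 3 ^ 3 * X 4 ∈ windmillIdeal := by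
    have : (X 0 - X 1 ^ 5 * X 3 ^ 3 * X 4 : MvPolynomial (Fin 5) ℚ)
        = X 1 ^ 2 * X 4 * (X 1 ^ 2 * X 3 ^ 2 + X 1 * X 3 * X 2 + X 2 ^ 2) * (X 2 - X 1 * X 3)
          - (X 1 ^ 2 * X 2 ^ 3 * X 4 - X 0) := by ring
    rw [this]
    exact sub_mem (Ideal.mul_mem_left _ _ hc) (Ideal.subset_span (by simp))
  fin_cases i <;> simp [windmillBasis, windmillSubst, ha, hc]

theorem exponentHom_windmillBasis (u : Fin 3 →₀ ℕ) :
    exponentHom (Awind.submatrix id windmillBasis) u = ![(u 2 : ℤ), u 0 - 3 * u 2, -u 1] := by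
  funext j
  fin_cases j <;>
    simp [exponentHom, Awind, windmillBasis, mulVec, dotProduct, Fin.sum_univ_three,
      sub_eq_add_neg]

theorem exponentHom_windmillBasis_injective :
    Function.Injective (exponentHom (Awind.submatrix id windmillBasis)) := by
  intro u v huv
  simp only [exponentHom_windmillBasis, vecCons_inj] at huv
  obtain ⟨h2, h0, h1, -⟩ := huv
  have e0 : u 0 = v 0 := by omega
  have e1 : u 1 = v 1 := by omega
  have e2 : u 2 = v 2 := by omega
  ext i
  fin_cases i
  exacts [e0, e1, e2]

/-- The toric ideal of the windmill matrix is generated by the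
four binomials `b d - c`, `b² c³ e - a`, `c⁵ e - a d²` and `b c⁴ e - a d`. -/
theorem toricIdeal_windmill :
    toricIdeal Awind = Ideal.span
      ({ X 1 * X 3 - X 2,
         X 1 ^ 2 * X 2 ^ 3 * X 4 - X 0,
         X 2 ^ 5 * X 4 - X 0 * X 3 ^ 2,
         X 1 * X 2 ^ 4 * X 4 - X 0 * X 3 } : Set (MvPolynomial (Fin 5) ℚ)) := by
  refine RingHom.ker_eq_of_sub_mem_of_injective (phi Awind) windmillIdeal_le_toricIdeal
    (rename windmillBasis) (aeval windmillSubst) (fun p => ?_) ?_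
  · rw [← AlgHom.comp_apply, comp_aeval]
    exact sub_aeval_mem _ X_sub_rename_windmillSubst_mem p
  · rw [← AlgHom.coe_comp, phi_comp_rename]
    exact phi_injective exponentHom_windmillBasis_injective
end

section
/- Let A be the 5×7 integer matrix with rows (0,0,0,0,1,−1,1), (−2,1,1,−1,−1,0,−3), (−1,−1,0,−1,−1,0,0), (−1,0,0,−1,0,−1,0), (1,0,0,1,0,1,0), with variables a,b,c,d,e,f,g. Then each of the binomials b c f g − d and a c − e f lies in the toric ideal I_A ⊆ ℚ[a,b,c,d,e,f,g] and is a primitive element of I_A. (The binomial a c − e f corresponds to the dimensionless quantity hL/(μc), the ratio of the Nusselt number to the product of the Reynolds and Prandtl numbers.) -/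
open MvPolynomial

/-- `x^u - x^v` is a primitive binomial of the toric ideal `I_A`:
it lies in `I_A`, `u ≠ v`, and there is no binomial `x^{u'} - x^{v'} ∈ I_A`
with `u' ≠ v'`, `(u',v') ≠ (u,v)`, `u' ≤ u` and `v' ≤ v` componentwise. -/
def IsPrimitiveBinomial {d n : ℕ} (A : Matrix (Fin d) (Fin n) ℤ)
    (u v : Fin n → ℕ) : Prop :=
  u ≠ v ∧ monoP u - monoP v ∈ toricIdeal A ∧
    ∀ u' v' : Fin n → ℕ, u' ≠ v' → (u', v') ≠ (u, v) →
      monoP u' - monoP v' ∈ toricIdeal A → ¬(u' ≤ u ∧ v' ≤ v)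

/-- The forced-convection matrix: rows `(0,0,0,0,1,-1,1)`, `(-2,1,1,-1,-1,0,-3)`,
`(-1,-1,0,-1,-1,0,0)`, `(-1,0,0,-1,0,-1,0)`, `(1,0,0,1,0,1,0)`; variables
`a, b, c, d, e, f, g`. -/
noncomputable def Aconv : Matrix (Fin 5) (Fin 7) ℤ :=
  !![0, 0, 0, 0, 1, -1, 1;
     -2, 1, 1, -1, -1, 0, -3;
     -1, -1, 0, -1, -1, 0, 0;
     -1, 0, 0, -1, 0, -1, 0;
     1, 0, 0, 1, 0, 1, 0]

open Matrix

/-! `x^u - x^v ∈ I_A` exactly when `A u = A v`. For both binomials, the row equations of `Aconv`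
restricted to exponent pairs `(u', v') ≤ (u, v)` force `(u', v') = t • (u, v)` for one natural
number `t`; as `(u, v)` is a nonzero `0/1` vector, `t` is `0` (so `u' = v'`) or `1`. -/

lemma phi_monoP {d n : ℕ} (A : Matrix (Fin d) (Fin n) ℤ) (u : Fin n → ℕ) :
    phi A (monoP u) = AddMonoidAlgebra.single (A *ᵥ fun i => (u i : ℤ)) 1 := by
  simp only [monoP, map_prod, phi, map_pow, aeval_X, AddMonoidAlgebra.single_pow, one_pow]
  rw [AddMonoidAlgebra.prod_single, Finset.prod_const_one]
  congr 1
  ext j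
  simp [Matrix.mulVec, dotProduct, Finset.sum_apply, mul_comm]

lemma monoP_sub_monoP_mem_toricIdeal_iff {d n : ℕ} (A : Matrix (Fin d) (Fin n) ℤ)
    (u v : Fin n → ℕ) :
    monoP u - monoP v ∈ toricIdeal A ↔ (A *ᵥ fun i => (u i : ℤ)) = A *ᵥ fun i => (v i : ℤ) := by
  rw [toricIdeal, RingHom.mem_ker, map_sub, sub_eq_zero, phi_monoP, phi_monoP]
  exact (AddMonoidAlgebra.single_left_injective one_ne_zero).eq_iff

lemma isPrimitiveBinomial_of_forall_eq_smul {d n : ℕ} (A : Matrix (Fin d) (Fin n) ℤ)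
    {u v : Fin n → ℕ} (hne : u ≠ v)
    (hker : (A *ᵥ fun i => (u i : ℤ)) = A *ᵥ fun i => (v i : ℤ))
    (hsmul : ∀ u' v' : Fin n → ℕ, u' ≤ u → v' ≤ v →
      ((A *ᵥ fun i => (u' i : ℤ)) = A *ᵥ fun i => (v' i : ℤ)) → ∃ t : ℕ, u' = t • u ∧ v' = t • v) :
    IsPrimitiveBinomial A u v := by
  refine ⟨hne, (monoP_sub_monoP_mem_toricIdeal_iff A u v).2 hker, ?_⟩
  rintro u' v' hne' hne'' hker' ⟨hu, hv⟩
  obtain ⟨t, rfl, rfl⟩ := hsmul u' v' hu hv ((monoP_sub_monoP_mem_toricIdeal_iff A _ _).1 hker')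
  have ht : t ≤ 1 := by
    obtain ⟨i, hi⟩ := Function.ne_iff.1 hne
    rcases Nat.eq_zero_or_pos (u i) with hui | hui
    · exact Nat.le_of_mul_le_mul_right (by simpa using hv i) (by omega)
    · exact Nat.le_of_mul_le_mul_right (by simpa using hu i) hui
  interval_cases t
  · exact hne' (by simp)
  · exact hne'' (by simp)

-- The fifth row of `Aconv` is the negative of the fourth.
lemma Aconv_mulVec_eq_iff (u v : Fin 7 → ℤ) :
    Aconv *ᵥ u = Aconv *ᵥ v ↔
      u 4 - u 5 + u 6 = v 4 - v 5 + v 6 ∧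
      -2 * u 0 + u 1 + u 2 - u 3 - u 4 - 3 * u 6 = -2 * v 0 + v 1 + v 2 - v 3 - v 4 - 3 * v 6 ∧
      u 0 + u 1 + u 3 + u 4 = v 0 + v 1 + v 3 + v 4 ∧
      u 0 + u 3 + u 5 = v 0 + v 3 + v 5 := by
  simp [_root_.funext_iff, Fin.forall_fin_succ, Aconv, dotProduct, Fin.sum_univ_succ]
  omega

lemma exists_smul_of_mulVec_eq_of_le_bcfg_d (u' v' : Fin 7 → ℕ)
    (hu : u' ≤ ![0, 1, 1, 0, 0, 1, 1]) (hv : v' ≤ ![0, 0, 0, 1, 0, 0, 0])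
    (h : (Aconv *ᵥ fun i => (u' i : ℤ)) = Aconv *ᵥ fun i => (v' i : ℤ)) :
    ∃ t : ℕ, u' = t • ![0, 1, 1, 0, 0, 1, 1] ∧ v' = t • ![0, 0, 0, 1, 0, 0, 0] := by
  rw [Aconv_mulVec_eq_iff] at h
  simp only [Nat.succ_eq_add_one, Nat.reduceAdd, Pi.le_def, Fin.forall_fin_succ, Fin.isValue,
    cons_val_zero, nonpos_iff_eq_zero, cons_val_succ, Fin.succ_zero_eq_one, Fin.succ_one_eq_two,
    Fin.reduceSucc, cons_val_fin_one, IsEmpty.forall_iff, and_true] at hu hv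
  refine ⟨v' 3, ?_, ?_⟩ <;> ext i <;> fin_cases i <;> simp <;> omega

lemma exists_smul_of_mulVec_eq_of_le_ac_ef (u' v' : Fin 7 → ℕ)
    (hu : u' ≤ ![1, 0, 1, 0, 0, 0, 0]) (hv : v' ≤ ![0, 0, 0, 0, 1, 1, 0])
    (h : (Aconv *ᵥ fun i => (u' i : ℤ)) = Aconv *ᵥ fun i => (v' i : ℤ)) :
    ∃ t : ℕ, u' = t • ![1, 0, 1, 0, 0, 0, 0] ∧ v' = t • ![0, 0, 0, 0, 1, 1, 0] := by
  rw [Aconv_mulVec_eq_iff] at h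
  simp only [Nat.succ_eq_add_one, Nat.reduceAdd, Pi.le_def, Fin.forall_fin_succ, Fin.isValue,
    cons_val_zero, nonpos_iff_eq_zero, cons_val_succ, Fin.succ_zero_eq_one, Fin.succ_one_eq_two,
    Fin.reduceSucc, cons_val_fin_one, IsEmpty.forall_iff, and_true] at hu hv
  refine ⟨u' 0, ?_, ?_⟩ <;> ext i <;> fin_cases i <;> simp <;> omega

/-- The binomials `b c f g - d` and `a c - e f` lie in the toric
ideal of the forced-convection matrix and are primitive. (The binomial `a c - e f`
corresponds to `hL/(μc)`, the Nusselt number over Reynolds times Prandtl.) -/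
theorem convection_primitive_binomials :
    IsPrimitiveBinomial Aconv ![0, 1, 1, 0, 0, 1, 1] ![0, 0, 0, 1, 0, 0, 0] ∧
    IsPrimitiveBinomial Aconv ![1, 0, 1, 0, 0, 0, 0] ![0, 0, 0, 0, 1, 1, 0] :=
  ⟨isPrimitiveBinomial_of_forall_eq_smul Aconv (by decide) (by decide)
      exists_smul_of_mulVec_eq_of_le_bcfg_d,
    isPrimitiveBinomial_of_forall_eq_smul Aconv (by decide) (by decide)
      exists_smul_of_mulVec_eq_of_le_ac_ef⟩
end
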